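/- Let 𝓘 be a finite set, Δ : 𝓘 → ℝ₊ with Δ(S) ≥ 1, and (μ_S) a probability distribution on 𝓘. For each node i with γᵢ = Σ_{S : i∈S} μ_S > 0, define E[Sᵢ] = (Σ_{S:i∈S}Δ(S)μ_S)/γᵢ, E[Sᵢ²] = (Σ_{S:i∈S}Δ(S)²μ_S)/γᵢ, E[Wᵢ] = (Σ_{S:i∉S}Δ(S)μ_S)/γᵢ, and E[Wᵢ²] = (Σ_{S:i∉S}Δ(S)²μ_S + 2(Σ_{S:i∉S}Δ(S)μ_S)²/γᵢ)/γᵢ. Then the expression (E[Wᵢ²] + 2E[Wᵢ]E[Sᵢ] + E[Sᵢ²])/(2E[Wᵢ] + 2E[Sᵢ]) + E[Sᵢ] + 1/2 simplifies algebraically to (Σ_S Δ(S)²μ_S)/(2 Σ_S Δ(S)μ_S) + (Σ_S Δ(S)μ_S)/γᵢ + 1/2. -/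

import Mathlib

open Finset

/-- Writing `a = aIn + aOut` and `b = bIn + bOut`, the numerator of the left-hand side is
`b / γ + 2 aOut a / γ²` and its denominator `2 a / γ`, so the quotient is `b / (2a) + aOut / γ`. -/
lemma aoi_expression_eq (γ aIn aOut bIn bOut : ℝ) (hγ : γ ≠ 0) (ha : aIn + aOut ≠ 0) :
    ((bOut + 2 * aOut ^ 2 / γ) / γ + 2 * (aOut / γ) * (aIn / γ) + bIn / γ)
        / (2 * (aOut / γ) + 2 * (aIn / γ)) + aIn / γ + 1 / 2
      = (bIn + bOut) / (2 * (aIn + aOut)) + (aIn + aOut) / γ + 1 / 2 := by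
  rw [show 2 * (aOut / γ) + 2 * (aIn / γ) = 2 * (aIn + aOut) / γ by ring]
  field_simp
  ring

lemma sum_filter_le_sum_mul_of_one_le {α : Type*} (s : Finset α) (p : α → Prop) [DecidablePred p]
    (w f : α → ℝ) (hw : ∀ x ∈ s, 0 ≤ w x) (hf : ∀ x ∈ s, 1 ≤ f x) :
    ∑ x ∈ s.filter p, w x ≤ ∑ x ∈ s, f x * w x :=
  calc ∑ x ∈ s.filter p, w x ≤ ∑ x ∈ s, w x :=
        sum_le_sum_of_subset_of_nonneg (filter_subset p s) fun x hx _ => hw x hx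
    _ ≤ ∑ x ∈ s, f x * w x :=
        sum_le_sum fun x hx => le_mul_of_one_le_left (hw x hx) (hf x hx)

theorem stmt_5_general {ι : Type*} [DecidableEq ι] (I : Finset (Finset ι))
    (μ Δ : Finset ι → ℝ) (i : ι)
    (hμ0 : ∀ S ∈ I, 0 ≤ μ S)
    (hΔ : ∀ S ∈ I, 1 ≤ Δ S)
    (hγ : 0 < ∑ S ∈ I.filter (fun S => i ∈ S), μ S) :
    let γ : ℝ := ∑ S ∈ I.filter (fun S => i ∈ S), μ S
    let ES : ℝ := (∑ S ∈ I.filter (fun S => i ∈ S), Δ S * μ S) / γ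
    let ES2 : ℝ := (∑ S ∈ I.filter (fun S => i ∈ S), (Δ S) ^ 2 * μ S) / γ
    let EW : ℝ := (∑ S ∈ I.filter (fun S => i ∉ S), Δ S * μ S) / γ
    let EW2 : ℝ := ((∑ S ∈ I.filter (fun S => i ∉ S), (Δ S) ^ 2 * μ S)
        + 2 * (∑ S ∈ I.filter (fun S => i ∉ S), Δ S * μ S) ^ 2 / γ) / γ
    (EW2 + 2 * EW * ES + ES2) / (2 * EW + 2 * ES) + ES + 1 / 2
      = (∑ S ∈ I, (Δ S) ^ 2 * μ S) / (2 * ∑ S ∈ I, Δ S * μ S)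
        + (∑ S ∈ I, Δ S * μ S) / γ + 1 / 2 := by
  intro γ ES ES2 EW EW2
  have ha : 0 < ∑ S ∈ I, Δ S * μ S :=
    hγ.trans_le (sum_filter_le_sum_mul_of_one_le I _ μ Δ hμ0 hΔ)
  rw [← sum_filter_add_sum_filter_not I (fun S => i ∈ S)] at ha
  have key := aoi_expression_eq γ _ _
    (∑ S ∈ I.filter (fun S => i ∈ S), (Δ S) ^ 2 * μ S)
    (∑ S ∈ I.filter (fun S => i ∉ S), (Δ S) ^ 2 * μ S) hγ.ne' ha.ne'
  simpa only [sum_filter_add_sum_filter_not] using key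

/-- Algebraic core of the closed-form AoI of a stationary randomized policy
(Theorem 4.1): with the mean waiting/service moments of node `i`, the
per-node AoI expression reduces to a common dispersion term plus the
throughput term `(Σ_S Δ S μ S)/γᵢ`. -/
theorem stmt_5 {ι : Type*} [DecidableEq ι] (I : Finset (Finset ι))
    (μ Δ : Finset ι → ℝ) (i : ι)
    (hμ0 : ∀ S ∈ I, 0 ≤ μ S) (hμ1 : ∑ S ∈ I, μ S = 1)
    (hΔ : ∀ S ∈ I, 1 ≤ Δ S)
    (hγ : 0 < ∑ S ∈ I.filter (fun S => i ∈ S), μ S) :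
    let γ : ℝ := ∑ S ∈ I.filter (fun S => i ∈ S), μ S
    let ES : ℝ := (∑ S ∈ I.filter (fun S => i ∈ S), Δ S * μ S) / γ
    let ES2 : ℝ := (∑ S ∈ I.filter (fun S => i ∈ S), (Δ S) ^ 2 * μ S) / γ
    let EW : ℝ := (∑ S ∈ I.filter (fun S => i ∉ S), Δ S * μ S) / γ
    let EW2 : ℝ := ((∑ S ∈ I.filter (fun S => i ∉ S), (Δ S) ^ 2 * μ S)
        + 2 * (∑ S ∈ I.filter (fun S => i ∉ S), Δ S * μ S) ^ 2 / γ) / γ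
    (EW2 + 2 * EW * ES + ES2) / (2 * EW + 2 * ES) + ES + 1 / 2
      = (∑ S ∈ I, (Δ S) ^ 2 * μ S) / (2 * ∑ S ∈ I, Δ S * μ S)
        + (∑ S ∈ I, Δ S * μ S) / γ + 1 / 2 :=
  stmt_5_general I μ Δ i hμ0 hΔ hγ
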